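/- arXiv:2202.08656 — 6 statements merged into one kernel-verified Lean document; each statement's English description precedes it below -/
import Mathlib

section
/- The quadratically regularized median is L-Lipschitz resilient in the voting rights: for any two weight vectors w and w', |QrMed_L(w, x) − QrMed_L(w', x)| ≤ L · ‖w − w'‖₁. -/
/-- Objective of the quadratically regularized median. -/
noncomputable def qrObj (L : ℝ) {N : ℕ} (w x : Fin N → ℝ) (z : ℝ) : ℝ :=
  z ^ 2 / (2 * L) + ∑ n, w n * |z - x n|

/-- Strong-convexity growth bound at the minimizer. -/
lemma qrObj_strong_min (L : ℝ) (hL : 0 < L) {N : ℕ}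
    (w x : Fin N → ℝ) (hw : ∀ n, 0 ≤ w n) (q : ℝ)
    (hq : ∀ z : ℝ, qrObj L w x q ≤ qrObj L w x z) (z : ℝ) :
    (z - q) ^ 2 / (2 * L) ≤ qrObj L w x z - qrObj L w x q := by
  set A : ℝ := (z - q) ^ 2 / (2 * L) with hA
  have hA0 : 0 ≤ A := div_nonneg (sq_nonneg _) (by linarith)
  -- key: for all t ∈ (0,1], (1-t) * A ≤ qrObj z - qrObj q
  have key : ∀ t : ℝ, 0 < t → t ≤ 1 →
      (1 - t) * A ≤ qrObj L w x z - qrObj L w x q := by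
    intro t ht0 ht1
    set y : ℝ := q + t * (z - q) with hy
    have hmin := hq y
    have hsum : ∑ n, w n * |y - x n| ≤
        (1 - t) * ∑ n, w n * |q - x n| + t * ∑ n, w n * |z - x n| := by
      rw [Finset.mul_sum, Finset.mul_sum, ← Finset.sum_add_distrib]
      apply Finset.sum_le_sum
      intro n _
      have h1 : |y - x n| ≤ (1 - t) * |q - x n| + t * |z - x n| := by
        have : y - x n = (1 - t) * (q - x n) + t * (z - x n) := by rw [hy]; ring
        rw [this]
        calc |(1 - t) * (q - x n) + t * (z - x n)|
            ≤ |(1 - t) * (q - x n)| + |t * (z - x n)| := abs_add_le _ _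
          _ = (1 - t) * |q - x n| + t * |z - x n| := by
              rw [abs_mul, abs_mul, abs_of_nonneg (by linarith : (0:ℝ) ≤ 1 - t),
                abs_of_nonneg ht0.le]
      calc w n * |y - x n| ≤ w n * ((1 - t) * |q - x n| + t * |z - x n|) :=
            mul_le_mul_of_nonneg_left h1 (hw n)
        _ = (1 - t) * (w n * |q - x n|) + t * (w n * |z - x n|) := by ring
    have hquad : y ^ 2 / (2 * L) =
        (1 - t) * (q ^ 2 / (2 * L)) + t * (z ^ 2 / (2 * L))
          - t * (1 - t) * ((z - q) ^ 2 / (2 * L)) := by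
      rw [hy]; field_simp; ring
    have hobj : qrObj L w x y ≤ (1 - t) * qrObj L w x q + t * qrObj L w x z
        - t * (1 - t) * A := by
      unfold qrObj
      rw [hquad, hA]
      linarith [hsum]
    have h2 : t * ((1 - t) * A) ≤ t * (qrObj L w x z - qrObj L w x q) := by
      nlinarith [hmin, hobj]
    exact le_of_mul_le_mul_left h2 ht0
  apply le_of_forall_sub_le
  intro ε hε
  have htpos : 0 < min 1 (ε / (A + 1)) :=
    lt_min one_pos (div_pos hε (by linarith))
  have := key (min 1 (ε / (A + 1))) htpos (min_le_left _ _)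
  have htA : min 1 (ε / (A + 1)) * A ≤ ε := by
    calc min 1 (ε / (A + 1)) * A ≤ (ε / (A + 1)) * A :=
          mul_le_mul_of_nonneg_right (min_le_right _ _) hA0
      _ ≤ (ε / (A + 1)) * (A + 1) :=
          mul_le_mul_of_nonneg_left (by linarith) (div_pos hε (by linarith)).le
      _ = ε := by field_simp
  nlinarith [this]

/-- QrMed is L-Lipschitz resilient in the voting rights:
if q and q' are the minimizers for weights w and w' respectively, then
|q − q'| ≤ L · ‖w − w'‖₁. -/
theorem qrMed_lipschitz_resilient (L : ℝ) (hL : 0 < L) {N : ℕ}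
    (w w' x : Fin N → ℝ) (hw : ∀ n, 0 ≤ w n) (hw' : ∀ n, 0 ≤ w' n)
    (q q' : ℝ)
    (hq : ∀ z : ℝ, qrObj L w x q ≤ qrObj L w x z)
    (hq' : ∀ z : ℝ, qrObj L w' x q' ≤ qrObj L w' x z) :
    |q - q'| ≤ L * ∑ n, |w n - w' n| := by
  have h1 := qrObj_strong_min L hL w x hw q hq q'
  have h2 := qrObj_strong_min L hL w' x hw' q' hq' q
  set S : ℝ := ∑ n, |w n - w' n| with hS
  have hdiff : qrObj L w x q' - qrObj L w x q +
      (qrObj L w' x q - qrObj L w' x q') =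
      ∑ n, (w n - w' n) * (|q' - x n| - |q - x n|) := by
    unfold qrObj
    rw [show (∑ n, (w n - w' n) * (|q' - x n| - |q - x n|)) =
        ∑ n, (w n * |q' - x n| - w n * |q - x n|
          + (w' n * |q - x n| - w' n * |q' - x n|)) from
      Finset.sum_congr rfl (fun n _ => by ring)]
    rw [Finset.sum_add_distrib, Finset.sum_sub_distrib, Finset.sum_sub_distrib]
    ring
  have hbound : ∑ n, (w n - w' n) * (|q' - x n| - |q - x n|) ≤ S * |q - q'| := by
    rw [hS, Finset.sum_mul]
    apply Finset.sum_le_sum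
    intro n _
    calc (w n - w' n) * (|q' - x n| - |q - x n|)
        ≤ |(w n - w' n) * (|q' - x n| - |q - x n|)| := le_abs_self _
      _ = |w n - w' n| * abs (|q' - x n| - |q - x n|) := abs_mul _ _
      _ ≤ |w n - w' n| * |q - q'| := by
          apply mul_le_mul_of_nonneg_left _ (abs_nonneg _)
          calc abs (|q' - x n| - |q - x n|) ≤ |q' - x n - (q - x n)| :=
                abs_abs_sub_abs_le_abs_sub _ _
            _ = |q - q'| := by rw [show q' - x n - (q - x n) = -(q - q') by ring,
                abs_neg]
  have hsq : (q - q') ^ 2 / L ≤ S * |q - q'| := by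
    have h12 : (q' - q) ^ 2 / (2 * L) + (q - q') ^ 2 / (2 * L) ≤ S * |q - q'| :=
      by linarith [h1, h2, hdiff, hbound]
    have : (q' - q) ^ 2 = (q - q') ^ 2 := by ring
    rw [this] at h12
    have heq : (q - q') ^ 2 / L = (q - q') ^ 2 / (2 * L) + (q - q') ^ 2 / (2 * L) := by
      field_simp
      ring
    linarith [h12]
  rcases eq_or_lt_of_le (abs_nonneg (q - q')) with h0 | h0
  · rw [← h0]
    have hS0 : 0 ≤ S := Finset.sum_nonneg fun n _ => abs_nonneg _
    positivity
  · have : |q - q'| * |q - q'| ≤ |q - q'| * (L * S) := by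
      have : (q - q') ^ 2 ≤ L * (S * |q - q'|) := by
        rw [div_le_iff₀ hL] at hsq; linarith [hsq]
      calc |q - q'| * |q - q'| = (q - q') ^ 2 := by rw [← abs_mul, abs_mul_self]; ring
        _ ≤ L * (S * |q - q'|) := this
        _ = |q - q'| * (L * S) := by ring
    exact le_of_mul_le_mul_left this h0
end

section
/- The quadratically regularized median is 1-Lipschitz continuous with respect to the input scores in the ℓ∞ norm: for any perturbation vector ξ, |QrMed_L(w, x + ξ) − QrMed_L(w, x)| ≤ ‖ξ‖∞. -/
private lemma abs_inc (y z c d : ℝ) (hyz : y ≤ z) (hcd : c ≤ d) :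
    |z - d| + |y - c| ≤ |z - c| + |y - d| := by
  rcases abs_cases (z - d) with ⟨h1, h1'⟩ | ⟨h1, h1'⟩ <;>
  rcases abs_cases (y - c) with ⟨h2, h2'⟩ | ⟨h2, h2'⟩ <;>
  rcases abs_cases (z - c) with ⟨h3, h3'⟩ | ⟨h3, h3'⟩ <;>
  rcases abs_cases (y - d) with ⟨h4, h4'⟩ | ⟨h4, h4'⟩ <;>
  linarith

/-- Strong convexity at the minimizer. -/
private lemma strong_min (L : ℝ) (hL : 0 < L) {N : ℕ} (w x : Fin N → ℝ)
    (hw : ∀ n, 0 ≤ w n) (q : ℝ) (hq : ∀ z : ℝ, qrObj L w x q ≤ qrObj L w x z)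
    (z : ℝ) : qrObj L w x q + (z - q) ^ 2 / (4 * L) ≤ qrObj L w x z := by
  have hmid := hq ((q + z) / 2)
  unfold qrObj at *
  have hg : ∑ n, w n * |(q + z) / 2 - x n| ≤
      ((∑ n, w n * |q - x n|) + ∑ n, w n * |z - x n|) / 2 := by
    rw [le_div_iff₀ (by norm_num : (0:ℝ) < 2), Finset.sum_mul, ← Finset.sum_add_distrib]
    apply Finset.sum_le_sum
    intro n _
    have : |(q + z) / 2 - x n| * 2 ≤ |q - x n| + |z - x n| := by
      have := abs_add_le (q - x n) (z - x n)
      have h2 : |(q + z) / 2 - x n| * 2 = |q - x n + (z - x n)| := by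
        rw [show q - x n + (z - x n) = ((q + z) / 2 - x n) * 2 by ring, abs_mul]
        simp [abs_of_nonneg]
      linarith
    nlinarith [hw n, abs_nonneg ((q + z) / 2 - x n)]
  have hh : ((q + z) / 2) ^ 2 / (2 * L) =
      (q ^ 2 / (2 * L) + z ^ 2 / (2 * L)) / 2 - (z - q) ^ 2 / (8 * L) := by
    field_simp; ring
  have h8 : (z - q) ^ 2 / (4 * L) = 2 * ((z - q) ^ 2 / (8 * L)) := by
    field_simp; ring
  linarith [hmid, hg, hh, h8]

private lemma oneside (L : ℝ) (hL : 0 < L) {N : ℕ}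
    (w x ξ : Fin N → ℝ) (hw : ∀ n, 0 ≤ w n)
    (q q' : ℝ)
    (hq : ∀ z : ℝ, qrObj L w x q ≤ qrObj L w x z)
    (hq' : ∀ z : ℝ, qrObj L w (x + ξ) q' ≤ qrObj L w (x + ξ) z) :
    q' - q ≤ ‖ξ‖ := by
  set m := ‖ξ‖ with hm
  by_contra hcon
  push_neg at hcon
  have hm0 : 0 ≤ m := norm_nonneg _
  have hδ : 0 < q' - q - m := by linarith
  -- increment comparison: g(q'-m) + g'(q+m) ≤ g'(q') + g(q)
  have hB : (∑ n, w n * |q' - m - x n|) + (∑ n, w n * |q + m - (x + ξ) n|) ≤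
      (∑ n, w n * |q' - (x + ξ) n|) + (∑ n, w n * |q - x n|) := by
    rw [← Finset.sum_add_distrib, ← Finset.sum_add_distrib]
    apply Finset.sum_le_sum
    intro n _
    have hξ : ξ n ≤ m := le_trans (le_abs_self _)
      (by simpa using norm_le_pi_norm ξ n)
    have := abs_inc (q + m) q' (x n + ξ n) (x n + m) (by linarith) (by linarith)
    have e1 : q' - m - x n = q' - (x n + m) := by ring
    have e2 : q + m - (x + ξ) n = (q + m) - (x n + ξ n) := by simp [Pi.add_apply]
    have e3 : q' - (x + ξ) n = q' - (x n + ξ n) := by simp [Pi.add_apply]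
    have e4 : q - x n = (q + m) - (x n + m) := by ring
    rw [e1, e2, e3, e4]
    nlinarith [hw n]
  have SC1 := strong_min L hL w x hw q hq (q' - m)
  have SC2 := strong_min L hL w (x + ξ) hw q' hq' (q + m)
  unfold qrObj at SC1 SC2
  have hL' : 0 < 4 * L := by linarith
  have hL'' : 0 < 2 * L := by linarith
  -- combine
  have key : q ^ 2 / (2 * L) + q' ^ 2 / (2 * L) + 2 * ((q' - m - q) ^ 2 / (4 * L)) ≤
      (q' - m) ^ 2 / (2 * L) + (q + m) ^ 2 / (2 * L) := by
    have e5 : (q + m - q') ^ 2 = (q' - m - q) ^ 2 := by ring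
    rw [e5] at SC2
    linarith
  have key2 : q ^ 2 + q' ^ 2 + (q' - m - q) ^ 2 ≤ (q' - m) ^ 2 + (q + m) ^ 2 := by
    have e6 : (q ^ 2 + q' ^ 2 + (q' - m - q) ^ 2) / (2 * L) =
        q ^ 2 / (2 * L) + q' ^ 2 / (2 * L) + 2 * ((q' - m - q) ^ 2 / (4 * L)) := by
      field_simp; ring
    have e7 : ((q' - m) ^ 2 + (q + m) ^ 2) / (2 * L) =
        (q' - m) ^ 2 / (2 * L) + (q + m) ^ 2 / (2 * L) := by
      field_simp
    have h9 : (q ^ 2 + q' ^ 2 + (q' - m - q) ^ 2) / (2 * L) ≤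
        ((q' - m) ^ 2 + (q + m) ^ 2) / (2 * L) := by rw [e6, e7]; exact key
    exact (div_le_div_iff_of_pos_right hL'').mp h9
  nlinarith [key2, hδ, hm0, mul_nonneg hm0 (le_of_lt hδ)]

/-- QrMed is 1-Lipschitz continuous with respect to the input scores in ℓ∞:
if q is the minimizer for scores x and q' for scores x + ξ, then
|q' − q| ≤ ‖ξ‖∞ (the sup norm on `Fin N → ℝ`). -/
theorem qrMed_lipschitz_scores (L : ℝ) (hL : 0 < L) {N : ℕ}
    (w x ξ : Fin N → ℝ) (hw : ∀ n, 0 ≤ w n)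
    (q q' : ℝ)
    (hq : ∀ z : ℝ, qrObj L w x q ≤ qrObj L w x z)
    (hq' : ∀ z : ℝ, qrObj L w (x + ξ) q' ≤ qrObj L w (x + ξ) z) :
    |q' - q| ≤ ‖ξ‖ := by
  have h1 : q' - q ≤ ‖ξ‖ := oneside L hL w x ξ hw q q' hq hq'
  have hx : (x + ξ) + (-ξ) = x := by funext n; simp
  have h2 : q - q' ≤ ‖-ξ‖ := by
    apply oneside L hL w (x + ξ) (-ξ) hw q' q hq'
    rw [hx]; exact hq
  rw [norm_neg] at h2
  rw [abs_le]
  constructor <;> linarith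
end

section
/- The quadratically regularized median lies between 0 and the (zero-closest) weighted median: QrMed_L(w, x) has the same sign as Med(w, x) and satisfies |QrMed_L(w, x)| ≤ |Med(w, x)|. -/
open Finset

/-- `M` is a weighted median of the scores `x` with weights `w`. -/
def IsWeightedMedian {N : ℕ} (w x : Fin N → ℝ) (M : ℝ) : Prop :=
  (∑ n ∈ univ.filter (fun n => x n < M), w n) ≤ (∑ n, w n) / 2 ∧
  (∑ n ∈ univ.filter (fun n => M < x n), w n) ≤ (∑ n, w n) / 2

/-- `M` is the weighted median closest to zero. -/
def IsZeroClosestMedian {N : ℕ} (w x : Fin N → ℝ) (M : ℝ) : Prop :=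
  IsWeightedMedian w x M ∧ ∀ M', IsWeightedMedian w x M' → |M| ≤ |M'|

/-!
The objective is `z ^ 2 / (2 * L)` plus `S z = ∑ n, w n * |z - x n|`, and a weighted median `M`
minimizes `S`; comparing the objective at `q` and at `M` gives `q ^ 2 ≤ M ^ 2`.
For the sign, let `M > 0`. Then `0` is not a weighted median, and since the weight below `0` is
at most half, more than half of it lies on positive scores. So `S` is nonincreasing on `(-∞, 0]`
and has negative right slope at `0`: a small `ε > 0` beats every `z ≤ 0`, hence `q > 0`.
The case `M < 0` follows by the symmetry `x ↦ -x`, and `M = 0` forces `q = 0`.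
-/

open Filter Topology

section AbsDev

variable {N : ℕ} (w x : Fin N → ℝ)

noncomputable def weightedAbsDev (z : ℝ) : ℝ :=
  ∑ n, w n * |z - x n|

lemma qrObj_eq_add_weightedAbsDev (L z : ℝ) :
    qrObj L w x z = z ^ 2 / (2 * L) + weightedAbsDev w x z :=
  rfl

lemma qrObj_zero (L : ℝ) : qrObj L w x 0 = weightedAbsDev w x 0 := by
  simp [qrObj_eq_add_weightedAbsDev]

lemma weightedAbsDev_neg (z : ℝ) : weightedAbsDev w (-x) z = weightedAbsDev w x (-z) := by
  simp only [weightedAbsDev, Pi.neg_apply, sub_neg_eq_add, ← abs_neg (-z - _), neg_sub',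
    neg_neg]

lemma qrObj_neg (L z : ℝ) : qrObj L w (-x) z = qrObj L w x (-z) := by
  rw [qrObj_eq_add_weightedAbsDev, qrObj_eq_add_weightedAbsDev, weightedAbsDev_neg, neg_sq]

lemma sum_mul_ite_lt (t : ℝ) :
    ∑ n, w n * (if t < x n then -1 else 1) =
      ∑ n, w n - 2 * ∑ n ∈ univ.filter (fun n => t < x n), w n := by
  have hsplit := sum_filter_add_sum_filter_not univ (fun n => t < x n) w
  simp only [mul_ite, mul_neg, mul_one, sum_ite, sum_neg_distrib]
  linarith

lemma sub_mul_ite_le_abs_sub_sub_abs_sub {t z : ℝ} (a : ℝ) (h : t ≤ z) :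
    (z - t) * (if t < a then -1 else 1) ≤ |z - a| - |t - a| := by
  split_ifs with ha <;>
    cases abs_cases (z - a) <;> cases abs_cases (t - a) <;> linarith

lemma abs_sub_sub_abs_sub_eq_sub_mul_ite {t z a : ℝ} (h : t ≤ z) (hgap : t < a → z ≤ a) :
    |z - a| - |t - a| = (z - t) * (if t < a then -1 else 1) := by
  split_ifs with ha
  · rw [abs_of_nonpos (by linarith [hgap ha]), abs_of_neg (by linarith)]; ring
  · rw [abs_of_nonneg (by linarith), abs_of_nonneg (by linarith)]; ring

/-- `∑ n, w n - 2 * ∑_{t < x n} w n` is the right derivative of `weightedAbsDev w x` at `t`;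
by convexity the function lies above its right tangent, with equality up to the next score. -/
lemma sub_mul_le_weightedAbsDev_sub (hw : ∀ n, 0 ≤ w n) {t z : ℝ} (h : t ≤ z) :
    (z - t) * (∑ n, w n - 2 * ∑ n ∈ univ.filter (fun n => t < x n), w n) ≤
      weightedAbsDev w x z - weightedAbsDev w x t := by
  rw [← sum_mul_ite_lt, mul_sum, weightedAbsDev, weightedAbsDev, ← sum_sub_distrib]
  refine sum_le_sum fun n _ => ?_
  rw [← mul_sub, mul_left_comm]
  exact mul_le_mul_of_nonneg_left (sub_mul_ite_le_abs_sub_sub_abs_sub (x n) h) (hw n)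

lemma weightedAbsDev_sub_eq_sub_mul {t z : ℝ} (h : t ≤ z) (hgap : ∀ n, t < x n → z ≤ x n) :
    weightedAbsDev w x z - weightedAbsDev w x t =
      (z - t) * (∑ n, w n - 2 * ∑ n ∈ univ.filter (fun n => t < x n), w n) := by
  rw [← sum_mul_ite_lt, mul_sum, weightedAbsDev, weightedAbsDev, ← sum_sub_distrib]
  refine sum_congr rfl fun n _ => ?_
  rw [← mul_sub, abs_sub_sub_abs_sub_eq_sub_mul_ite h (hgap n)]
  ring

lemma weightedAbsDev_le_of_le (hw : ∀ n, 0 ≤ w n) {t z : ℝ}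
    (ht : ∑ n ∈ univ.filter (fun n => t < x n), w n ≤ (∑ n, w n) / 2) (h : t ≤ z) :
    weightedAbsDev w x t ≤ weightedAbsDev w x z := by
  have := sub_mul_le_weightedAbsDev_sub w x hw h
  nlinarith

lemma weightedAbsDev_le_of_ge (hw : ∀ n, 0 ≤ w n) {t z : ℝ}
    (ht : ∑ n ∈ univ.filter (fun n => x n < t), w n ≤ (∑ n, w n) / 2) (h : z ≤ t) :
    weightedAbsDev w x t ≤ weightedAbsDev w x z := by
  have ht' : ∑ n ∈ univ.filter (fun n => -t < (-x) n), w n ≤ (∑ n, w n) / 2 := by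
    simpa only [Pi.neg_apply, neg_lt_neg_iff] using ht
  simpa only [weightedAbsDev_neg, neg_neg] using
    weightedAbsDev_le_of_le w (-x) hw ht' (neg_le_neg h)

lemma IsWeightedMedian.weightedAbsDev_le (hw : ∀ n, 0 ≤ w n) {M : ℝ}
    (hM : IsWeightedMedian w x M) (z : ℝ) : weightedAbsDev w x M ≤ weightedAbsDev w x z :=
  (le_total M z).elim (weightedAbsDev_le_of_le w x hw hM.2) (weightedAbsDev_le_of_ge w x hw hM.1)

lemma isWeightedMedian_neg_iff {M : ℝ} :
    IsWeightedMedian w (-x) (-M) ↔ IsWeightedMedian w x M := by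
  simp only [IsWeightedMedian, Pi.neg_apply, neg_lt_neg_iff, and_comm]

lemma IsZeroClosestMedian.neg {M : ℝ} (hM : IsZeroClosestMedian w x M) :
    IsZeroClosestMedian w (-x) (-M) := by
  refine ⟨(isWeightedMedian_neg_iff w x).2 hM.1, fun M' hM' => ?_⟩
  rw [← neg_neg M', isWeightedMedian_neg_iff] at hM'
  simpa only [abs_neg] using hM.2 _ hM'

end AbsDev

section QrMed

variable {L : ℝ} {N : ℕ} {w x : Fin N → ℝ}

lemma abs_le_abs_of_isWeightedMedian (hL : 0 < L) (hw : ∀ n, 0 ≤ w n) {q M : ℝ}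
    (hq : ∀ z, qrObj L w x q ≤ qrObj L w x z) (hM : IsWeightedMedian w x M) : |q| ≤ |M| := by
  have hdev := hM.weightedAbsDev_le w x hw q
  have hobj := hq M
  rw [qrObj_eq_add_weightedAbsDev, qrObj_eq_add_weightedAbsDev] at hobj
  rw [← sq_le_sq, ← div_le_div_iff_of_pos_right (by positivity : (0 : ℝ) < 2 * L)]
  linarith

lemma eventually_forall_le_of_pos (x : Fin N → ℝ) :
    ∀ᶠ ε in 𝓝[>] (0 : ℝ), ∀ n, 0 < x n → ε ≤ x n := by
  refine eventually_all.2 fun n => ?_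
  by_cases hn : 0 < x n
  · exact (eventually_le_nhds hn).filter_mono nhdsWithin_le_nhds |>.mono fun _ h _ => h
  · exact .of_forall fun _ h => absurd h hn

/-- The quadratic term is flat at `0`, so the negative right slope of `weightedAbsDev` at `0`
wins for small `ε`. -/
lemma exists_pos_qrObj_lt_qrObj_zero (hL : 0 < L)
    (hpos : (∑ n, w n) / 2 < ∑ n ∈ univ.filter (fun n => 0 < x n), w n) :
    ∃ ε > 0, qrObj L w x ε < qrObj L w x 0 := by
  obtain ⟨c, hc_eq, hc⟩ : ∃ c, c = 2 * ∑ n ∈ univ.filter (fun n => 0 < x n), w n - ∑ n, w n ∧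
      0 < c := ⟨_, rfl, by linarith⟩
  obtain ⟨ε, hgap, hεc, hε⟩ := (eventually_forall_le_of_pos x).and
    ((eventually_lt_nhds (by positivity : 0 < 2 * L * c)).filter_mono nhdsWithin_le_nhds
      |>.and self_mem_nhdsWithin) |>.exists
  have hdev := weightedAbsDev_sub_eq_sub_mul w x hε.le (by simpa using hgap)
  have hsq : ε ^ 2 / (2 * L) < ε * c := by
    rw [div_lt_iff₀ (by positivity)]
    nlinarith
  rw [hc_eq] at hsq
  refine ⟨ε, hε, ?_⟩
  rw [qrObj_eq_add_weightedAbsDev, qrObj_zero]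
  linarith

lemma pos_of_isZeroClosestMedian_pos (hL : 0 < L) (hw : ∀ n, 0 ≤ w n) {q M : ℝ}
    (hq : ∀ z, qrObj L w x q ≤ qrObj L w x z) (hM : IsZeroClosestMedian w x M) (hM0 : 0 < M) :
    0 < q := by
  have hneg : ∑ n ∈ univ.filter (fun n => x n < 0), w n ≤ (∑ n, w n) / 2 :=
    le_trans (sum_le_sum_of_subset_of_nonneg (monotone_filter_right _ fun _ _ => (·.trans hM0))
      fun n _ _ => hw n) hM.1.1
  have hpos : (∑ n, w n) / 2 < ∑ n ∈ univ.filter (fun n => 0 < x n), w n := by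
    by_contra! h
    have := hM.2 0 ⟨hneg, h⟩
    rw [abs_zero, abs_of_pos hM0] at this
    linarith
  obtain ⟨ε, -, hε⟩ := exists_pos_qrObj_lt_qrObj_zero hL hpos
  by_contra! hq0
  have hdev := weightedAbsDev_le_of_ge w x hw hneg hq0
  have hobj := hq ε
  rw [qrObj_eq_add_weightedAbsDev, qrObj_zero] at hε
  rw [qrObj_eq_add_weightedAbsDev, qrObj_eq_add_weightedAbsDev] at hobj
  have : 0 ≤ q ^ 2 / (2 * L) := by positivity
  linarith

end QrMed

/-- QrMed has the same sign as the zero-closest weighted median, and is at most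
as large in absolute value. -/
theorem qrMed_sign_and_le_med (L : ℝ) (hL : 0 < L) {N : ℕ}
    (w x : Fin N → ℝ) (hw : ∀ n, 0 ≤ w n)
    (q M : ℝ)
    (hq : ∀ z : ℝ, qrObj L w x q ≤ qrObj L w x z)
    (hM : IsZeroClosestMedian w x M) :
    Real.sign q = Real.sign M ∧ |q| ≤ |M| := by
  have habs := abs_le_abs_of_isWeightedMedian hL hw hq hM.1
  refine ⟨?_, habs⟩
  rcases lt_trichotomy M 0 with hM0 | rfl | hM0
  · have hq' : ∀ z, qrObj L w (-x) (-q) ≤ qrObj L w (-x) z := fun z => by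
      simpa only [qrObj_neg, neg_neg] using hq (-z)
    have := pos_of_isZeroClosestMedian_pos hL hw hq' hM.neg (neg_pos.2 hM0)
    rw [Real.sign_of_neg (neg_pos.1 this), Real.sign_of_neg hM0]
  · rw [abs_nonpos_iff.1 (habs.trans_eq abs_zero)]
  · rw [Real.sign_of_pos (pos_of_isZeroClosestMedian_pos hL hw hq hM hM0), Real.sign_of_pos hM0]
end

section
/- Adding extra nonnegative voting rights v changes the clipped mean by at most 2Δ‖v‖₁/‖w‖₁: |ClMean(w, x | μ, Δ) − ClMean(w + v, x | μ, Δ)| ≤ 2 (‖v‖₁/‖w‖₁) Δ. -/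
/-- Clipping of `x` to the interval `[μ - Δ, μ + Δ]`. -/
def clip (x μ Δ : ℝ) : ℝ := max (μ - Δ) (min (μ + Δ) x)

/-- The clipped mean. -/
noncomputable def clMean {N : ℕ} (w x : Fin N → ℝ) (μ Δ : ℝ) : ℝ :=
  (∑ n, w n * clip (x n) μ Δ) / ∑ n, w n

/-!
Write `S = ∑ wₙ cₙ`, `T = ∑ vₙ cₙ`, `W = ∑ wₙ`, `V = ∑ vₙ` for the clipped scores `cₙ`.
The difference of the two means is `(S V - W T) / (W (W + V))`, and
`S V - W T = ∑ₙ ∑ₘ wₙ vₘ (cₙ - cₘ)` is at most `W V · 2Δ` in absolute value because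
all clipped scores lie in an interval of length `2Δ`.
-/

open Finset

theorem clip_mem_Icc {Δ : ℝ} (x μ : ℝ) (hΔ : 0 ≤ Δ) : clip x μ Δ ∈ Set.Icc (μ - Δ) (μ + Δ) :=
  ⟨le_max_left _ _, max_le (by linarith) (min_le_left _ _)⟩

theorem abs_clip_sub_clip_le {Δ : ℝ} (x y μ : ℝ) (hΔ : 0 ≤ Δ) :
    |clip x μ Δ - clip y μ Δ| ≤ 2 * Δ := by
  obtain ⟨hx₁, hx₂⟩ := clip_mem_Icc x μ hΔ
  obtain ⟨hy₁, hy₂⟩ := clip_mem_Icc y μ hΔ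
  rw [abs_le]
  constructor <;> linarith

section WeightedMean

variable {ι : Type*} (s : Finset ι) {w v c : ι → ℝ} {D : ℝ}

theorem sum_mul_sum_sub_sum_mul_sum :
    (∑ i ∈ s, w i * c i) * (∑ j ∈ s, v j) - (∑ i ∈ s, w i) * (∑ j ∈ s, v j * c j) =
      ∑ i ∈ s, ∑ j ∈ s, w i * v j * (c i - c j) := by
  simp only [sum_mul_sum, ← sum_sub_distrib]
  refine sum_congr rfl fun i _ => sum_congr rfl fun j _ => ?_
  ring

theorem abs_sum_mul_sum_sub_sum_mul_sum_le (hw : ∀ i ∈ s, 0 ≤ w i) (hv : ∀ i ∈ s, 0 ≤ v i)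
    (hc : ∀ i ∈ s, ∀ j ∈ s, |c i - c j| ≤ D) :
    |(∑ i ∈ s, w i * c i) * (∑ j ∈ s, v j) - (∑ i ∈ s, w i) * (∑ j ∈ s, v j * c j)| ≤
      D * (∑ i ∈ s, w i) * (∑ j ∈ s, v j) := by
  rw [sum_mul_sum_sub_sum_mul_sum, mul_assoc, sum_mul_sum, mul_sum]
  refine (abs_sum_le_sum_abs _ _).trans <| sum_le_sum fun i hi => ?_
  rw [mul_sum]
  refine (abs_sum_le_sum_abs _ _).trans <| sum_le_sum fun j hj => ?_
  rw [abs_mul, abs_of_nonneg (mul_nonneg (hw i hi) (hv j hj)), mul_comm]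
  exact mul_le_mul_of_nonneg_right (hc i hi j hj) (mul_nonneg (hw i hi) (hv j hj))

theorem abs_weightedMean_sub_weightedMean_add_le (hw : ∀ i ∈ s, 0 ≤ w i)
    (hv : ∀ i ∈ s, 0 ≤ v i) (hW : 0 < ∑ i ∈ s, w i) (hc : ∀ i ∈ s, ∀ j ∈ s, |c i - c j| ≤ D) :
    |(∑ i ∈ s, w i * c i) / (∑ i ∈ s, w i) -
        (∑ i ∈ s, (w + v) i * c i) / (∑ i ∈ s, (w + v) i)| ≤
      D * ((∑ i ∈ s, v i) / (∑ i ∈ s, w i)) := by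
  set W := ∑ i ∈ s, w i
  set V := ∑ i ∈ s, v i
  have hV : 0 ≤ V := sum_nonneg hv
  have hWV : 0 < W + V := by linarith
  have hD : 0 ≤ D := by
    obtain ⟨i, hi⟩ := nonempty_of_sum_ne_zero hW.ne'
    exact (abs_nonneg _).trans (hc i hi i hi)
  simp only [Pi.add_apply, add_mul, sum_add_distrib]
  have hdiff : (∑ i ∈ s, w i * c i) / W - ((∑ i ∈ s, w i * c i) + ∑ i ∈ s, v i * c i) / (W + V) =
      ((∑ i ∈ s, w i * c i) * V - W * (∑ i ∈ s, v i * c i)) / (W * (W + V)) := by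
    field_simp
    ring
  rw [hdiff, abs_div, abs_of_pos (mul_pos hW hWV), div_le_iff₀ (mul_pos hW hWV)]
  calc _ ≤ D * W * V := abs_sum_mul_sum_sub_sum_mul_sum_le s hw hv hc
    _ ≤ D * (V / W) * (W * (W + V)) := by
      rw [show D * (V / W) * (W * (W + V)) = D * V * (W + V) by field_simp]
      nlinarith [mul_nonneg hD hV]

end WeightedMean

/-- Adding extra nonnegative voting rights `v` changes the clipped mean by at
most `2 Δ ‖v‖₁ / ‖w‖₁`. -/
theorem clMean_extra_weights {N : ℕ} (w v x : Fin N → ℝ)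
    (hw : ∀ n, 0 ≤ w n) (hv : ∀ n, 0 ≤ v n)
    (hpos : 0 < ∑ n, w n) (μ Δ : ℝ) (hΔ : 0 ≤ Δ) :
    |clMean w x μ Δ - clMean (w + v) x μ Δ| ≤
      2 * ((∑ n, v n) / (∑ n, w n)) * Δ := by
  rw [mul_comm 2, mul_assoc, mul_comm]
  exact abs_weightedMean_sub_weightedMean_add_le univ (fun n _ => hw n) (fun n _ => hv n) hpos
    fun n _ m _ => abs_clip_sub_clip_le (x n) (x m) μ hΔ
end

section
/- Median Cesàro lemma: if a real sequence (u_n) converges to l, then the sequence of running medians M_n = Med(u_1, …, u_n) also converges to l. -/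
open Filter Finset

/-- Median Cesàro lemma: if a real sequence `u` converges to `l`, and for every
`n ≥ 1` the value `M n` is a median of `u 0, …, u (n-1)` (at most `n/2` of
these values lie strictly below `M n` and at most `n/2` strictly above), then
`M n → l`. -/
theorem median_cesaro (u : ℕ → ℝ) (l : ℝ) (hu : Tendsto u atTop (nhds l))
    (M : ℕ → ℝ)
    (hM : ∀ n : ℕ, 1 ≤ n →
      (((range n).filter (fun k => u k < M n)).card : ℝ) ≤ n / 2 ∧
      (((range n).filter (fun k => M n < u k)).card : ℝ) ≤ n / 2) :
    Tendsto M atTop (nhds l) := by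
  rw [Metric.tendsto_atTop] at hu ⊢
  intro ε hε
  obtain ⟨N, hN⟩ := hu (ε/2) (by linarith)
  refine ⟨2*N+1, fun n hn => ?_⟩
  have h1 : 1 ≤ n := by omega
  obtain ⟨hlo, hhi⟩ := hM n h1
  have hcard : ∀ (P : ℕ → Prop) [DecidablePred P], (∀ k, N ≤ k → k < n → P k) →
      ((n : ℝ) - N) ≤ ((range n).filter P).card := by
    intro P _ hP
    have hsub : Finset.Ico N n ⊆ (range n).filter P := by
      intro k hk
      simp only [Finset.mem_Ico] at hk
      simp only [mem_filter, mem_range]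
      exact ⟨hk.2, hP k hk.1 hk.2⟩
    have hc := Finset.card_le_card hsub
    rw [Nat.card_Ico] at hc
    have hc' : ((n - N : ℕ) : ℝ) ≤ (((range n).filter P).card : ℝ) := by exact_mod_cast hc
    have hNn : N ≤ n := by omega
    rw [Nat.cast_sub hNn] at hc'
    exact hc'
  have hn' : (2 * N + 1 : ℝ) ≤ (n : ℝ) := by exact_mod_cast hn
  have hMlow : l - ε/2 ≤ M n := by
    by_contra h
    push_neg at h
    have := hcard (fun k => M n < u k) (fun k hk hk' => by
      have := hN k hk
      rw [Real.dist_eq, abs_lt] at this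
      linarith [this.1])
    linarith
  have hMhigh : M n ≤ l + ε/2 := by
    by_contra h
    push_neg at h
    have := hcard (fun k => u k < M n) (fun k hk hk' => by
      have := hN k hk
      rw [Real.dist_eq, abs_lt] at this
      linarith [this.2])
    linarith
  rw [Real.dist_eq, abs_lt]
  constructor <;> linarith
end

section
/- Min-max normalization bound under unanimity: suppose voter n's scores on their scored set A_n are a positive affine transformation of a ground-truth vector θ* restricted to A_n, and voter n scored at least two alternatives with distinct ground-truth values. Then the min-max normalized scores of voter n satisfy MinMax(θ_n) = s*·MinMax(θ*)|_{A_n} + τ* for some constants s*, τ* with 1 ≤ s* ≤ s̄(θ*) and −s̄(θ*) ≤ τ* ≤ 0, where s̄(θ*) = (max_{a,b} |θ*_a − θ*_b|) / (min_{a,b : θ*_a ≠ θ*_b} |θ*_a − θ*_b|). -/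
open Finset

/-- Min-max normalization of a score vector `x` over a nonempty finite set `S`. -/
noncomputable def minMaxNorm {ι : Type*} (S : Finset ι) (hS : S.Nonempty)
    (x : ι → ℝ) (a : ι) : ℝ :=
  (x a - S.inf' hS x) / (S.sup' hS x - S.inf' hS x)

/-- The scaling bound `s̄(θ*)`: the ratio of the largest score gap to the
smallest nonzero score gap of `θ*`. -/
noncomputable def sbar {ι : Type*} [Fintype ι] (θ : ι → ℝ)
    (h : ({p : ι × ι | θ p.1 ≠ θ p.2} : Set (ι × ι)).toFinset.Nonempty) : ℝ :=
  (univ.sup' ⟨h.choose, mem_univ _⟩ fun p : ι × ι => |θ p.1 - θ p.2|) /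
    (({p : ι × ι | θ p.1 ≠ θ p.2} : Set (ι × ι)).toFinset.inf' h
      fun p : ι × ι => |θ p.1 - θ p.2|)

/-- Min-max normalization bound under unanimity: if voter `n`'s scores on the
scored set `An` are a positive affine transformation of the ground truth `θ*`,
and the voter scored two alternatives with distinct ground-truth values, then
the voter's min-max normalized scores are an affine transformation
`s · MinMax(θ*) + τ` of the min-max normalized ground truth, with
`1 ≤ s ≤ s̄(θ*)` and `−s̄(θ*) ≤ τ ≤ 0`. -/
theorem minmax_unanimity_bound {ι : Type*} [Fintype ι] [Nonempty ι]
    (θstar : ι → ℝ)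
    (hnc : ({p : ι × ι | θstar p.1 ≠ θstar p.2} : Set (ι × ι)).toFinset.Nonempty)
    (An : Finset ι) (hAn : An.Nonempty)
    (θn : ι → ℝ) (α β : ℝ) (hα : 0 < α)
    (haffine : ∀ a ∈ An, θn a = α * θstar a + β)
    (hcomp : ∃ a ∈ An, ∃ b ∈ An, θstar a ≠ θstar b) :
    ∃ s τ : ℝ,
      1 ≤ s ∧ s ≤ sbar θstar hnc ∧
      -(sbar θstar hnc) ≤ τ ∧ τ ≤ 0 ∧
      ∀ a ∈ An,
        minMaxNorm An hAn θn a =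
          s * minMaxNorm univ univ_nonempty θstar a + τ := by
  classical
  obtain ⟨a₀, ha₀, b₀, hb₀, hab⟩ := hcomp
  set m : ℝ := univ.inf' univ_nonempty θstar with hm
  set M : ℝ := univ.sup' univ_nonempty θstar with hM
  set mA : ℝ := An.inf' hAn θstar with hmA
  set MA : ℝ := An.sup' hAn θstar with hMA
  have hmle : m ≤ mA := Finset.le_inf' hAn θstar fun b _ => Finset.inf'_le θstar (mem_univ b)
  have hMge : MA ≤ M := Finset.sup'_le hAn θstar fun b _ => Finset.le_sup' θstar (mem_univ b)
  have hDA : 0 < MA - mA := by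
    rcases lt_or_gt_of_ne hab with h | h
    · have h1 : mA ≤ θstar a₀ := Finset.inf'_le θstar ha₀
      have h2 : θstar b₀ ≤ MA := Finset.le_sup' θstar hb₀
      linarith
    · have h1 : mA ≤ θstar b₀ := Finset.inf'_le θstar hb₀
      have h2 : θstar a₀ ≤ MA := Finset.le_sup' θstar ha₀
      linarith
  have hD : 0 < M - m := by linarith
  set g : ℝ := (({p : ι × ι | θstar p.1 ≠ θstar p.2} : Set (ι × ι)).toFinset.inf' hnc
      fun p : ι × ι => |θstar p.1 - θstar p.2|) with hg
  have hgpos : 0 < g := by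
    obtain ⟨p, hp, hpe⟩ :=
      Finset.exists_mem_eq_inf' hnc (fun p : ι × ι => |θstar p.1 - θstar p.2|)
    rw [hg, hpe]
    have hne : θstar p.1 ≠ θstar p.2 := by simpa using Set.mem_toFinset.mp hp
    exact abs_pos.mpr (sub_ne_zero.mpr hne)
  have hgDA : g ≤ MA - mA := by
    have hmem : (a₀, b₀) ∈ ({p : ι × ι | θstar p.1 ≠ θstar p.2} : Set (ι × ι)).toFinset :=
      Set.mem_toFinset.mpr hab
    have h1 : g ≤ |θstar a₀ - θstar b₀| :=
      Finset.inf'_le (fun p : ι × ι => |θstar p.1 - θstar p.2|) hmem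
    have h2 : |θstar a₀ - θstar b₀| ≤ MA - mA := by
      rw [abs_sub_le_iff]
      constructor
      · linarith [Finset.le_sup' θstar ha₀, Finset.inf'_le θstar hb₀]
      · linarith [Finset.le_sup' θstar hb₀, Finset.inf'_le θstar ha₀]
    linarith
  have hnum : (univ.sup' ⟨hnc.choose, mem_univ _⟩ fun p : ι × ι => |θstar p.1 - θstar p.2|)
      = M - m := by
    apply le_antisymm
    · apply Finset.sup'_le
      intro p _
      rw [abs_sub_le_iff]
      constructor
      · linarith [Finset.le_sup' θstar (mem_univ p.1), Finset.inf'_le θstar (mem_univ p.2)]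
      · linarith [Finset.le_sup' θstar (mem_univ p.2), Finset.inf'_le θstar (mem_univ p.1)]
    · obtain ⟨aM, _, haM⟩ :=
        Finset.exists_mem_eq_sup' (univ_nonempty : (univ : Finset ι).Nonempty) θstar
      obtain ⟨am, _, ham⟩ :=
        Finset.exists_mem_eq_inf' (univ_nonempty : (univ : Finset ι).Nonempty) θstar
      have h1 : M - m = θstar aM - θstar am := by rw [hM, hm, ← haM, ← ham]
      have h2 : θstar aM - θstar am ≤ |θstar aM - θstar am| := le_abs_self _
      have h3 : |θstar aM - θstar am| ≤
          univ.sup' ⟨hnc.choose, mem_univ _⟩ fun p : ι × ι => |θstar p.1 - θstar p.2| :=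
        Finset.le_sup' (fun p : ι × ι => |θstar p.1 - θstar p.2|) (mem_univ (aM, am))
      linarith
  have hsbar : sbar θstar hnc = (M - m) / g := by
    unfold sbar
    rw [hnum]
  have hinfn : An.inf' hAn θn = α * mA + β := by
    apply le_antisymm
    · obtain ⟨c, hc, hceq⟩ := Finset.exists_mem_eq_inf' hAn θstar
      have h1 : An.inf' hAn θn ≤ θn c := Finset.inf'_le θn hc
      rw [haffine c hc] at h1
      rw [hmA, hceq]
      exact h1
    · apply Finset.le_inf'
      intro b hb
      rw [haffine b hb]
      have h1 : mA ≤ θstar b := Finset.inf'_le θstar hb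
      nlinarith
  have hsupn : An.sup' hAn θn = α * MA + β := by
    apply le_antisymm
    · apply Finset.sup'_le
      intro b hb
      rw [haffine b hb]
      have h1 : θstar b ≤ MA := Finset.le_sup' θstar hb
      nlinarith
    · obtain ⟨c, hc, hceq⟩ := Finset.exists_mem_eq_sup' hAn θstar
      have h1 : θn c ≤ An.sup' hAn θn := Finset.le_sup' θn hc
      rw [haffine c hc] at h1
      rw [hMA, hceq]
      exact h1
  refine ⟨(M - m) / (MA - mA), (m - mA) / (MA - mA), ?_, ?_, ?_, ?_, ?_⟩
  · rw [le_div_iff₀ hDA]; linarith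
  · rw [hsbar]
    exact div_le_div₀ hD.le (by linarith) hgpos hgDA
  · rw [hsbar]
    have h1 : (mA - m) / (MA - mA) ≤ (M - m) / g :=
      div_le_div₀ hD.le (by linarith) hgpos hgDA
    have h2 : (m - mA) / (MA - mA) = -((mA - m) / (MA - mA)) := by ring
    linarith
  · apply div_nonpos_of_nonpos_of_nonneg <;> linarith
  · intro a ha
    unfold minMaxNorm
    rw [hinfn, hsupn, haffine a ha, ← hm, ← hM]
    have hα' : α ≠ 0 := ne_of_gt hα
    have h1 : MA - mA ≠ 0 := ne_of_gt hDA
    have h2 : M - m ≠ 0 := ne_of_gt hD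
    have key : (α * θstar a + β - (α * mA + β)) / (α * MA + β - (α * mA + β))
        = (θstar a - mA) / (MA - mA) := by
      rw [show α * θstar a + β - (α * mA + β) = α * (θstar a - mA) by ring,
        show α * MA + β - (α * mA + β) = α * (MA - mA) by ring,
        mul_div_mul_left _ _ hα']
    rw [key]
    field_simp
    ring
end
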